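/- Let A ∈ ℂ^{n×n} be Hermitian and B ∈ ℂ^{n×n} be Hermitian positive definite with condition number κ(B) = ‖B‖₂·‖B⁻¹‖₂. Let Q ∈ ℂ^{n×r} with Q*BQ = I_r and T = Q*AQ, and suppose ‖A − (BQ)T(BQ)*‖_B ≤ 2ε for some ε ≥ 0. Let Ω ∈ ℂ^{n×r} be such that F := Q*BΩ is invertible, and set T̃ = (F*)⁻¹(Ω*AΩ)F⁻¹. Let μ₁ ≥ μ₂ ≥ … ≥ μ_r be the eigenvalues of the Hermitian matrix T sorted in decreasing order, and θ₁ ≥ θ₂ ≥ … ≥ θ_r be those of the Hermitian matrix T̃. Then for every j ∈ {1,…,r}, |μ_j − θ_j| ≤ 2ε·√κ(B)·σ_max(Ω)²/σ_min(F)². -/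

import Mathlib

/-!
With `N = Ω F⁻¹` one has `(BQ)ᴴ N = 1`, so `T̃ - T = Nᴴ E N` for `E = A - (BQ) T (BQ)ᴴ`.
Conjugating by `B^{1/2}` turns the `B`-norm into the Euclidean norm, whence
`|z* E z| ≤ ‖E‖_B √κ(B) ‖z‖²`; together with `‖N x‖ ≤ ‖Ω‖₂ ‖F⁻¹‖₂ ‖x‖` this shows that the
quadratic forms of `T` and `T̃` differ by at most `2ε √κ(B) ‖Ω‖₂² ‖F⁻¹‖₂² ‖x‖²`. Weyl's
inequality, proved by the Courant–Fischer dimension count, transfers this bound to the sorted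
eigenvalues.
-/

open Matrix ComplexOrder

noncomputable section

def vecNorm2 {m : Type*} [Fintype m] (x : m → ℂ) : ℝ :=
  Real.sqrt (∑ i, ‖x i‖ ^ 2)

def specNorm {m p : Type*} [Fintype m] [Fintype p] (M : Matrix m p ℂ) : ℝ :=
  sSup {t : ℝ | ∃ x : p → ℂ, x ≠ 0 ∧ t = vecNorm2 (M *ᵥ x) / vecNorm2 x}

def Binner {m : Type*} [Fintype m] (B : Matrix m m ℂ) (x y : m → ℂ) : ℂ :=
  star y ⬝ᵥ B *ᵥ x

def vecBnorm {m : Type*} [Fintype m] (B : Matrix m m ℂ) (x : m → ℂ) : ℝ :=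
  Real.sqrt (star x ⬝ᵥ B *ᵥ x).re

def matBnorm {m : Type*} [Fintype m] (B M : Matrix m m ℂ) : ℝ :=
  sSup {t : ℝ | ∃ x : m → ℂ, x ≠ 0 ∧ t = vecBnorm B (M *ᵥ x) / vecBnorm B x}

section MatrixAlgebra

variable {R : Type*} {l k : Type*} [Fintype l] [Fintype k]

theorem Matrix.star_mulVec_dotProduct_mulVec [CommSemiring R] [StarRing R] (N : Matrix l k R)
    (E : Matrix l l R) (x : k → R) :
    star (N *ᵥ x) ⬝ᵥ E *ᵥ (N *ᵥ x) = star x ⬝ᵥ (Nᴴ * E * N) *ᵥ x := by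
  rw [star_mulVec, ← dotProduct_mulVec, mulVec_mulVec, mulVec_mulVec, Matrix.mul_assoc]

theorem Matrix.conjTranspose_mul_mul_sub_eq [Ring R] [StarRing R] [DecidableEq k]
    {P N : Matrix l k R} (hPN : Pᴴ * N = 1) (A : Matrix l l R) (T : Matrix k k R) :
    Nᴴ * A * N - T = Nᴴ * (A - P * T * Pᴴ) * N := by
  have hT : Nᴴ * (P * T * Pᴴ) * N = T :=
    calc Nᴴ * (P * T * Pᴴ) * N = (Pᴴ * N)ᴴ * T * (Pᴴ * N) := by
          simp only [conjTranspose_mul, conjTranspose_conjTranspose, Matrix.mul_assoc]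
      _ = T := by rw [hPN, conjTranspose_one, Matrix.one_mul, Matrix.mul_one]
  rw [Matrix.mul_sub, Matrix.sub_mul, hT]

end MatrixAlgebra

theorem le_sSup_div_mul {X : Type*} [Zero X] {f g : X → ℝ} {C : ℝ} (hC : ∀ x, f x ≤ C * g x)
    (hg : ∀ x, x ≠ 0 → 0 < g x) (hf0 : f 0 = 0) (hg0 : g 0 = 0) (x : X) :
    f x ≤ sSup {t | ∃ x, x ≠ 0 ∧ t = f x / g x} * g x := by
  rcases eq_or_ne x 0 with rfl | hx
  · simp [hf0, hg0]
  have hbdd : BddAbove {t | ∃ x, x ≠ 0 ∧ t = f x / g x} := by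
    refine ⟨C, ?_⟩
    rintro _ ⟨y, hy, rfl⟩
    exact (div_le_iff₀ (hg y hy)).2 (hC y)
  rw [← div_le_iff₀ (hg x hx)]
  exact le_csSup hbdd ⟨x, hx, rfl⟩

section Euclidean

variable {m p : Type*} [Fintype m] [Fintype p]

theorem vecNorm2_eq_norm_toLp (x : m → ℂ) : vecNorm2 x = ‖WithLp.toLp 2 x‖ :=
  (EuclideanSpace.norm_eq _).symm

theorem vecNorm2_nonneg (x : m → ℂ) : 0 ≤ vecNorm2 x := Real.sqrt_nonneg _

theorem vecNorm2_pos {x : m → ℂ} (hx : x ≠ 0) : 0 < vecNorm2 x := by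
  simpa [vecNorm2_eq_norm_toLp] using hx

theorem vecNorm2_zero : vecNorm2 (0 : m → ℂ) = 0 := by simp [vecNorm2]

theorem sq_vecNorm2 (x : m → ℂ) : vecNorm2 x ^ 2 = (star x ⬝ᵥ x).re := by
  rw [vecNorm2_eq_norm_toLp, @norm_sq_eq_re_inner ℂ, EuclideanSpace.inner_toLp_toLp,
    dotProduct_comm, RCLike.re_to_complex]

theorem norm_star_dotProduct_le (x y : m → ℂ) : ‖star x ⬝ᵥ y‖ ≤ vecNorm2 x * vecNorm2 y := by
  rw [vecNorm2_eq_norm_toLp, vecNorm2_eq_norm_toLp, dotProduct_comm,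
    ← EuclideanSpace.inner_toLp_toLp]
  exact norm_inner_le_norm _ _

open scoped Matrix.Norms.L2Operator in
theorem vecNorm2_mulVec_le_l2_opNorm [DecidableEq p] (M : Matrix m p ℂ) (x : p → ℂ) :
    vecNorm2 (M *ᵥ x) ≤ ‖M‖ * vecNorm2 x := by
  simpa [vecNorm2_eq_norm_toLp] using M.l2_opNorm_mulVec (WithLp.toLp 2 x)

theorem specNorm_nonneg (M : Matrix m p ℂ) : 0 ≤ specNorm M :=
  Real.sSup_nonneg fun _ ⟨_, _, ht⟩ => ht ▸ div_nonneg (vecNorm2_nonneg _) (vecNorm2_nonneg _)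

open scoped Matrix.Norms.L2Operator in
theorem vecNorm2_mulVec_le [DecidableEq p] (M : Matrix m p ℂ) (x : p → ℂ) :
    vecNorm2 (M *ᵥ x) ≤ specNorm M * vecNorm2 x :=
  le_sSup_div_mul (vecNorm2_mulVec_le_l2_opNorm M) (fun _ => vecNorm2_pos)
    (by rw [mulVec_zero, vecNorm2_zero]) vecNorm2_zero x

theorem re_star_dotProduct_mulVec_le [DecidableEq m] (M : Matrix m m ℂ) (x : m → ℂ) :
    (star x ⬝ᵥ M *ᵥ x).re ≤ specNorm M * vecNorm2 x ^ 2 :=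
  calc (star x ⬝ᵥ M *ᵥ x).re ≤ ‖star x ⬝ᵥ M *ᵥ x‖ := Complex.re_le_norm _
    _ ≤ vecNorm2 x * (specNorm M * vecNorm2 x) :=
      (norm_star_dotProduct_le _ _).trans
        (mul_le_mul_of_nonneg_left (vecNorm2_mulVec_le M x) (vecNorm2_nonneg x))
    _ = specNorm M * vecNorm2 x ^ 2 := by ring

theorem sq_vecNorm2_mulVec (N : Matrix m p ℂ) (x : p → ℂ) :
    vecNorm2 (N *ᵥ x) ^ 2 = (star x ⬝ᵥ (Nᴴ * N) *ᵥ x).re := by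
  rw [sq_vecNorm2, star_mulVec, ← dotProduct_mulVec, mulVec_mulVec]

end Euclidean

section BNorm

open scoped MatrixOrder

variable {m : Type*} [Fintype m] {B : Matrix m m ℂ}

theorem vecBnorm_nonneg (x : m → ℂ) : 0 ≤ vecBnorm B x := Real.sqrt_nonneg _

theorem sq_vecBnorm (hB : B.PosSemidef) (x : m → ℂ) :
    vecBnorm B x ^ 2 = (star x ⬝ᵥ B *ᵥ x).re :=
  Real.sq_sqrt (by simpa using hB.re_dotProduct_nonneg x)

theorem vecBnorm_pos (hB : B.PosDef) {x : m → ℂ} (hx : x ≠ 0) : 0 < vecBnorm B x :=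
  Real.sqrt_pos.2 (by simpa using hB.re_dotProduct_pos hx)

theorem matBnorm_nonneg (E : Matrix m m ℂ) : 0 ≤ matBnorm B E :=
  Real.sSup_nonneg fun _ ⟨_, _, ht⟩ => ht ▸ div_nonneg (vecBnorm_nonneg _) (vecBnorm_nonneg _)

variable [DecidableEq m]

theorem sq_vecBnorm_le_specNorm_mul (hB : B.PosSemidef) (x : m → ℂ) :
    vecBnorm B x ^ 2 ≤ specNorm B * vecNorm2 x ^ 2 :=
  sq_vecBnorm hB x ▸ re_star_dotProduct_mulVec_le B x

theorem vecBnorm_eq_vecNorm2_sqrt_mulVec (hB : B.PosSemidef) (x : m → ℂ) :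
    vecBnorm B x = vecNorm2 (CFC.sqrt B *ᵥ x) := by
  have hS : (CFC.sqrt B)ᴴ = CFC.sqrt B := (CFC.sqrt_nonneg B).posSemidef.1
  rw [← Real.sqrt_sq (vecNorm2_nonneg _), sq_vecNorm2_mulVec, hS,
    CFC.sqrt_mul_sqrt_self B hB.nonneg, vecBnorm]

theorem Matrix.PosDef.inv_sqrt_mul_sqrt (hB : B.PosDef) : (CFC.sqrt B)⁻¹ * CFC.sqrt B = 1 :=
  nonsing_inv_mul _ ((isUnit_iff_isUnit_det _).1
    ((CFC.isUnit_sqrt_iff B hB.posSemidef.nonneg).2 hB.isUnit))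

theorem sq_vecNorm2_le_specNorm_inv_mul (hB : B.PosDef) (x : m → ℂ) :
    vecNorm2 x ^ 2 ≤ specNorm B⁻¹ * vecBnorm B x ^ 2 := by
  set S := CFC.sqrt B
  have hS : Sᴴ = S := (CFC.sqrt_nonneg B).posSemidef.1
  have hSS : S * S = B := CFC.sqrt_mul_sqrt_self B hB.posSemidef.nonneg
  have hinv : (S⁻¹)ᴴ * S⁻¹ = B⁻¹ := by
    rw [conjTranspose_nonsing_inv, hS, ← Matrix.mul_inv_rev, hSS]
  have hx : x = S⁻¹ *ᵥ (S *ᵥ x) := by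
    rw [mulVec_mulVec, hB.inv_sqrt_mul_sqrt, one_mulVec]
  rw [vecBnorm_eq_vecNorm2_sqrt_mulVec hB.posSemidef, hx, sq_vecNorm2_mulVec, hinv, ← hx]
  exact re_star_dotProduct_mulVec_le _ _

theorem vecBnorm_mulVec_le (hB : B.PosDef) (E : Matrix m m ℂ) (x : m → ℂ) :
    vecBnorm B (E *ᵥ x) ≤ matBnorm B E * vecBnorm B x := by
  set S := CFC.sqrt B
  refine le_sSup_div_mul (f := fun y => vecBnorm B (E *ᵥ y)) (C := specNorm (S * E * S⁻¹))
    (fun y => ?_) (fun _ => vecBnorm_pos hB) (by simp [vecBnorm]) (by simp [vecBnorm]) x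
  have hconj : S *ᵥ (E *ᵥ y) = (S * E * S⁻¹) *ᵥ (S *ᵥ y) := by
    rw [mulVec_mulVec, mulVec_mulVec, Matrix.mul_assoc, hB.inv_sqrt_mul_sqrt, Matrix.mul_one]
  rw [vecBnorm_eq_vecNorm2_sqrt_mulVec hB.posSemidef,
    vecBnorm_eq_vecNorm2_sqrt_mulVec hB.posSemidef, hconj]
  exact vecNorm2_mulVec_le _ _

theorem vecNorm2_mulVec_le_matBnorm (hB : B.PosDef) (E : Matrix m m ℂ) (z : m → ℂ) :
    vecNorm2 (E *ᵥ z) ≤ matBnorm B E * √(specNorm B * specNorm B⁻¹) * vecNorm2 z := by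
  have hκ : 0 ≤ specNorm B * specNorm B⁻¹ := mul_nonneg (specNorm_nonneg _) (specNorm_nonneg _)
  rw [← pow_le_pow_iff_left₀ (vecNorm2_nonneg _)
    (by positivity [matBnorm_nonneg (B := B) E, vecNorm2_nonneg z]) two_ne_zero]
  calc vecNorm2 (E *ᵥ z) ^ 2 ≤ specNorm B⁻¹ * vecBnorm B (E *ᵥ z) ^ 2 :=
        sq_vecNorm2_le_specNorm_inv_mul hB _
    _ ≤ specNorm B⁻¹ * (matBnorm B E * vecBnorm B z) ^ 2 := by
      gcongr
      · exact specNorm_nonneg _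
      · exact vecBnorm_nonneg _
      · exact vecBnorm_mulVec_le hB E z
    _ = specNorm B⁻¹ * matBnorm B E ^ 2 * vecBnorm B z ^ 2 := by ring
    _ ≤ specNorm B⁻¹ * matBnorm B E ^ 2 * (specNorm B * vecNorm2 z ^ 2) := by
      gcongr
      · exact mul_nonneg (specNorm_nonneg _) (sq_nonneg _)
      · exact sq_vecBnorm_le_specNorm_mul hB.posSemidef z
    _ = (matBnorm B E * √(specNorm B * specNorm B⁻¹) * vecNorm2 z) ^ 2 := by
      rw [mul_pow, mul_pow, Real.sq_sqrt hκ]; ring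

theorem abs_re_star_dotProduct_mulVec_le (hB : B.PosDef) (E : Matrix m m ℂ) (z : m → ℂ) :
    |(star z ⬝ᵥ E *ᵥ z).re| ≤ matBnorm B E * √(specNorm B * specNorm B⁻¹) * vecNorm2 z ^ 2 :=
  calc |(star z ⬝ᵥ E *ᵥ z).re| ≤ ‖star z ⬝ᵥ E *ᵥ z‖ := Complex.abs_re_le_norm _
    _ ≤ vecNorm2 z * (matBnorm B E * √(specNorm B * specNorm B⁻¹) * vecNorm2 z) :=
      (norm_star_dotProduct_le _ _).trans
        (mul_le_mul_of_nonneg_left (vecNorm2_mulVec_le_matBnorm hB E z) (vecNorm2_nonneg z))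
    _ = _ := by ring

end BNorm

open scoped InnerProductSpace

theorem Submodule.exists_mem_inf_ne_zero_of_lt_finrank_add {K V : Type*} [DivisionRing K]
    [AddCommGroup V] [Module K V] [FiniteDimensional K V] {s t : Submodule K V}
    (h : Module.finrank K V < Module.finrank K s + Module.finrank K t) :
    ∃ x ∈ s ⊓ t, x ≠ 0 := by
  by_contra! h'
  exact h.not_ge (finrank_add_finrank_le_of_disjoint (disjoint_def.2 fun x hs ht => h' x ⟨hs, ht⟩))

section Rayleigh

variable {𝕜 E κ : Type*} [RCLike 𝕜] [NormedAddCommGroup E] [InnerProductSpace 𝕜 E] [Fintype κ]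

theorem OrthonormalBasis.inner_eq_zero_of_mem_span_image (b : OrthonormalBasis κ 𝕜 E) {S : Set κ}
    {x : E} (hx : x ∈ Submodule.span 𝕜 (b '' S)) {k : κ} (hk : k ∉ S) : ⟪b k, x⟫_𝕜 = 0 := by
  refine Submodule.mem_orthogonal_singleton_iff_inner_right.1 (Submodule.span_le.2 ?_ hx)
  rintro _ ⟨i, hi, rfl⟩
  exact Submodule.mem_orthogonal_singleton_iff_inner_right.2
    (b.orthonormal.2 (ne_of_mem_of_not_mem hi hk).symm)

theorem OrthonormalBasis.finrank_span_image (b : OrthonormalBasis κ 𝕜 E) (S : Finset κ) :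
    Module.finrank 𝕜 (Submodule.span 𝕜 (b '' S)) = S.card := by
  rw [Set.image_eq_range]
  exact (finrank_span_eq_card (b.orthonormal.linearIndependent.comp _ Subtype.val_injective)).trans
    (Fintype.card_coe S)

variable {T : E →ₗ[𝕜] E} (hT : T.IsSymmetric) (b : OrthonormalBasis κ 𝕜 E) {eig : κ → ℝ}
  (hb : ∀ k, T (b k) = (eig k : 𝕜) • b k)
include hT hb

theorem LinearMap.IsSymmetric.re_inner_apply_self_eq_sum (x : E) :
    RCLike.re ⟪x, T x⟫_𝕜 = ∑ k, eig k * ‖⟪b k, x⟫_𝕜‖ ^ 2 := by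
  rw [← b.sum_inner_mul_inner, map_sum]
  refine Finset.sum_congr rfl fun k _ => ?_
  rw [← hT, hb, inner_smul_left, RCLike.conj_ofReal, mul_left_comm, ← inner_conj_symm x,
    RCLike.conj_mul, ← RCLike.ofReal_pow, ← RCLike.ofReal_mul, RCLike.ofReal_re]

theorem LinearMap.IsSymmetric.mul_sq_norm_le_re_inner_of_mem_span {S : Set κ} {a : ℝ}
    (ha : ∀ k ∈ S, a ≤ eig k) {x : E} (hx : x ∈ Submodule.span 𝕜 (b '' S)) :
    a * ‖x‖ ^ 2 ≤ RCLike.re ⟪x, T x⟫_𝕜 := by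
  rw [hT.re_inner_apply_self_eq_sum b hb, ← b.sum_sq_norm_inner_right, Finset.mul_sum]
  refine Finset.sum_le_sum fun k _ => ?_
  by_cases hk : k ∈ S
  · exact mul_le_mul_of_nonneg_right (ha k hk) (sq_nonneg _)
  · simp [b.inner_eq_zero_of_mem_span_image hx hk]

theorem LinearMap.IsSymmetric.re_inner_le_mul_sq_norm_of_mem_span {S : Set κ} {a : ℝ}
    (ha : ∀ k ∈ S, eig k ≤ a) {x : E} (hx : x ∈ Submodule.span 𝕜 (b '' S)) :
    RCLike.re ⟪x, T x⟫_𝕜 ≤ a * ‖x‖ ^ 2 := by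
  have hTneg : (-T).IsSymmetric := fun x y => by
    simp only [LinearMap.neg_apply, inner_neg_left, inner_neg_right, hT x y]
  have := hTneg.mul_sq_norm_le_re_inner_of_mem_span b (eig := -eig) (fun k => by simp [hb])
    (fun k hk => neg_le_neg (ha k hk)) hx
  simpa [inner_neg_right] using this

end Rayleigh

section Weyl

variable {𝕜 E : Type*} [RCLike 𝕜] [NormedAddCommGroup E] [InnerProductSpace 𝕜 E]

/-- The span of the eigenvectors of `R` for `ξ 0, …, ξ j` and that of the eigenvectors of `P`
for `ν j, …, ν (r - 1)` have dimensions `j + 1` and `r - j`, so they share a nonzero vector. -/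
theorem LinearMap.IsSymmetric.le_add_of_forall_re_inner_le {r : ℕ} {P R : E →ₗ[𝕜] E}
    (hP : P.IsSymmetric) (hR : R.IsSymmetric) {bP bR : OrthonormalBasis (Fin r) 𝕜 E}
    {ν ξ : Fin r → ℝ} (hbP : ∀ i, P (bP i) = (ν i : 𝕜) • bP i)
    (hbR : ∀ i, R (bR i) = (ξ i : 𝕜) • bR i) (hν : Antitone ν) (hξ : Antitone ξ) {d : ℝ}
    (hd : ∀ x, RCLike.re ⟪x, R x⟫_𝕜 ≤ RCLike.re ⟪x, P x⟫_𝕜 + d * ‖x‖ ^ 2) (j : Fin r) :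
    ξ j ≤ ν j + d := by
  have : FiniteDimensional 𝕜 E := bP.toBasis.finiteDimensional_of_finite
  obtain ⟨x, ⟨hxR, hxP⟩, hx⟩ := Submodule.exists_mem_inf_ne_zero_of_lt_finrank_add
    (s := Submodule.span 𝕜 (bR '' ↑(Finset.Iic j))) (t := Submodule.span 𝕜 (bP '' ↑(Finset.Ici j)))
    (by rw [bR.finrank_span_image, bP.finrank_span_image, Module.finrank_eq_card_basis bP.toBasis]
        simp only [Fin.card_Iic, Fin.card_Ici, Fintype.card_fin]
        omega)
  have hlow : ξ j * ‖x‖ ^ 2 ≤ RCLike.re ⟪x, R x⟫_𝕜 :=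
    hR.mul_sq_norm_le_re_inner_of_mem_span bR hbR (fun i hi => hξ (Finset.mem_Iic.1 hi)) hxR
  have hup : RCLike.re ⟪x, P x⟫_𝕜 ≤ ν j * ‖x‖ ^ 2 :=
    hP.re_inner_le_mul_sq_norm_of_mem_span bP hbP (fun i hi => hν (Finset.mem_Ici.1 hi)) hxP
  have hx2 : 0 < ‖x‖ ^ 2 := by positivity
  exact le_of_mul_le_mul_right (by linarith [hd x]) hx2

end Weyl

section HermitianWeyl

variable {𝕜 : Type*} [RCLike 𝕜]

theorem Matrix.IsHermitian.toEuclideanLin_eigenvectorBasis {ι : Type*} [Fintype ι] [DecidableEq ι]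
    {M : Matrix ι ι 𝕜} (hM : M.IsHermitian) (i : ι) :
    toEuclideanLin M (hM.eigenvectorBasis i) = (hM.eigenvalues i : 𝕜) • hM.eigenvectorBasis i := by
  apply WithLp.ofLp_injective 2
  change M *ᵥ WithLp.ofLp (hM.eigenvectorBasis i) = _
  rw [hM.mulVec_eigenvectorBasis, WithLp.ofLp_smul, RCLike.real_smul_eq_coe_smul (K := 𝕜)]

variable {r : ℕ} {P R : Matrix (Fin r) (Fin r) 𝕜} (hP : P.IsHermitian) (hR : R.IsHermitian)
  {eP eR : Equiv.Perm (Fin r)}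
include hP hR

theorem Matrix.IsHermitian.eigenvalues_le_add_of_forall_re_le
    (hPe : Antitone (hP.eigenvalues ∘ eP)) (hRe : Antitone (hR.eigenvalues ∘ eR)) {d : ℝ}
    (hd : ∀ x : Fin r → 𝕜,
      RCLike.re (star x ⬝ᵥ R *ᵥ x) ≤ RCLike.re (star x ⬝ᵥ P *ᵥ x) + d * RCLike.re (star x ⬝ᵥ x))
    (j : Fin r) : hR.eigenvalues (eR j) ≤ hP.eigenvalues (eP j) + d := by
  refine (isSymmetric_toEuclideanLin_iff.2 hP).le_add_of_forall_re_inner_le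
    (isSymmetric_toEuclideanLin_iff.2 hR) (bP := hP.eigenvectorBasis.reindex eP.symm)
    (bR := hR.eigenvectorBasis.reindex eR.symm) (fun i => ?_) (fun i => ?_) hPe hRe (fun x => ?_) j
  · simpa using hP.toEuclideanLin_eigenvectorBasis (eP i)
  · simpa using hR.toEuclideanLin_eigenvectorBasis (eR i)
  · have hquad (M : Matrix (Fin r) (Fin r) 𝕜) :
        ⟪x, toEuclideanLin M x⟫_𝕜 = star (WithLp.ofLp x) ⬝ᵥ M *ᵥ WithLp.ofLp x := by
      rw [EuclideanSpace.inner_eq_star_dotProduct, dotProduct_comm]; rfl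
    rw [hquad R, hquad P, @norm_sq_eq_re_inner 𝕜, EuclideanSpace.inner_eq_star_dotProduct,
      dotProduct_comm (WithLp.ofLp x)]
    exact hd (WithLp.ofLp x)

theorem Matrix.IsHermitian.abs_eigenvalues_sub_le
    (hPe : Antitone (hP.eigenvalues ∘ eP)) (hRe : Antitone (hR.eigenvalues ∘ eR)) {d : ℝ}
    (hd : ∀ x : Fin r → 𝕜, |RCLike.re (star x ⬝ᵥ (R - P) *ᵥ x)| ≤ d * RCLike.re (star x ⬝ᵥ x))
    (j : Fin r) : |hR.eigenvalues (eR j) - hP.eigenvalues (eP j)| ≤ d := by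
  have hsub (x : Fin r → 𝕜) : RCLike.re (star x ⬝ᵥ (R - P) *ᵥ x) =
      RCLike.re (star x ⬝ᵥ R *ᵥ x) - RCLike.re (star x ⬝ᵥ P *ᵥ x) := by
    rw [sub_mulVec, dotProduct_sub, map_sub]
  rw [abs_sub_le_iff]
  constructor
  · linarith [hP.eigenvalues_le_add_of_forall_re_le hR hPe hRe
      (fun x => by linarith [hsub x, (abs_le.1 (hd x)).2]) j]
  · linarith [hR.eigenvalues_le_add_of_forall_re_le hP hRe hPe
      (fun x => by linarith [hsub x, (abs_le.1 (hd x)).1]) j]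

end HermitianWeyl

theorem statement8_general {n r : ℕ} (A B : Matrix (Fin n) (Fin n) ℂ)
    (hB : B.PosDef)
    (Q : Matrix (Fin n) (Fin r) ℂ)
    (ε : ℝ) (hε : 0 ≤ ε)
    (hlow : matBnorm B (A - (B * Q) * (Qᴴ * A * Q) * (B * Q)ᴴ) ≤ 2 * ε)
    (Ω : Matrix (Fin n) (Fin r) ℂ) (hF : IsUnit (Qᴴ * B * Ω))
    (hT : (Qᴴ * A * Q).IsHermitian)
    (hT' : (((Qᴴ * B * Ω)ᴴ)⁻¹ * (Ωᴴ * A * Ω) * (Qᴴ * B * Ω)⁻¹).IsHermitian)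
    (μs θs : Fin r → ℝ) (e e' : Equiv.Perm (Fin r))
    (hμ : μs = hT.eigenvalues ∘ e) (hθ : θs = hT'.eigenvalues ∘ e')
    (hμdec : Antitone μs) (hθdec : Antitone θs) :
    ∀ j : Fin r, |μs j - θs j| ≤
      2 * ε * Real.sqrt (specNorm B * specNorm B⁻¹) * specNorm Ω ^ 2 *
        specNorm (Qᴴ * B * Ω)⁻¹ ^ 2 := by
  subst hμ hθ
  set F := Qᴴ * B * Ω
  set N := Ω * F⁻¹
  have hN : (B * Q)ᴴ * N = 1 := by
    rw [conjTranspose_mul, hB.1.eq, ← Matrix.mul_assoc,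
      mul_nonsing_inv _ ((isUnit_iff_isUnit_det F).1 hF)]
  have hT'N : (Fᴴ)⁻¹ * (Ωᴴ * A * Ω) * F⁻¹ = Nᴴ * A * N := by
    simp only [N, conjTranspose_mul, conjTranspose_nonsing_inv, Matrix.mul_assoc]
  have hNx (x : Fin r → ℂ) : vecNorm2 (N *ᵥ x) ≤ specNorm Ω * specNorm F⁻¹ * vecNorm2 x := by
    rw [← mulVec_mulVec, mul_assoc]
    exact (vecNorm2_mulVec_le _ _).trans
      (mul_le_mul_of_nonneg_left (vecNorm2_mulVec_le _ _) (specNorm_nonneg _))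
  intro j
  rw [abs_sub_comm]
  refine hT.abs_eigenvalues_sub_le hT' hμdec hθdec (fun x => ?_) j
  rw [hT'N, conjTranspose_mul_mul_sub_eq hN, ← star_mulVec_dotProduct_mulVec,
    RCLike.re_to_complex, RCLike.re_to_complex, ← sq_vecNorm2]
  calc _ ≤ _ := abs_re_star_dotProduct_mulVec_le hB _ (N *ᵥ x)
    _ ≤ 2 * ε * √(specNorm B * specNorm B⁻¹) * (specNorm Ω * specNorm F⁻¹ * vecNorm2 x) ^ 2 := by
      gcongr
      · exact vecNorm2_nonneg _
      · exact hNx x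
    _ = _ := by ring

/-- the decreasingly sorted eigenvalues μ_j of T = Q*AQ and θ_j of the
    single-pass matrix T̃ satisfy |μ_j − θ_j| ≤ 2ε·√κ(B)·σ_max(Ω)²/σ_min(F)². -/
theorem statement8 {n r : ℕ} (A B : Matrix (Fin n) (Fin n) ℂ)
    (hA : A.IsHermitian) (hB : B.PosDef)
    (Q : Matrix (Fin n) (Fin r) ℂ) (hQ : Qᴴ * B * Q = 1)
    (ε : ℝ) (hε : 0 ≤ ε)
    (hlow : matBnorm B (A - (B * Q) * (Qᴴ * A * Q) * (B * Q)ᴴ) ≤ 2 * ε)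
    (Ω : Matrix (Fin n) (Fin r) ℂ) (hF : IsUnit (Qᴴ * B * Ω))
    (hT : (Qᴴ * A * Q).IsHermitian)
    (hT' : (((Qᴴ * B * Ω)ᴴ)⁻¹ * (Ωᴴ * A * Ω) * (Qᴴ * B * Ω)⁻¹).IsHermitian)
    (μs θs : Fin r → ℝ) (e e' : Equiv.Perm (Fin r))
    (hμ : μs = hT.eigenvalues ∘ e) (hθ : θs = hT'.eigenvalues ∘ e')
    (hμdec : Antitone μs) (hθdec : Antitone θs) :
    ∀ j : Fin r, |μs j - θs j| ≤
      2 * ε * Real.sqrt (specNorm B * specNorm B⁻¹) * specNorm Ω ^ 2 *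
        specNorm (Qᴴ * B * Ω)⁻¹ ^ 2 :=
  statement8_general A B hB Q ε hε hlow Ω hF hT hT' μs θs e e' hμ hθ hμdec hθdec
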